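/- arXiv:2107.01647 — 3 statements merged into one kernel-verified Lean document; each statement's English description precedes it below -/
import Mathlib

section
/- If u : ℝ³ → ℝ is a positive smooth solution of u_t + (ln u)u_z + u_zzz + u_xxz = 0, then for every ε ∈ ℝ the function v(t,x,z) = e^{ε} u(t, x, z - ε t), generated by X₄ = t∂_z + u∂_u, is again a solution, i.e. v_t + (ln v) v_z + v_zzz + v_xxz = 0. -/
noncomputable def pt (u : ℝ → ℝ → ℝ → ℝ) : ℝ → ℝ → ℝ → ℝ :=
  fun t x z => deriv (fun s => u s x z) t

noncomputable def px (u : ℝ → ℝ → ℝ → ℝ) : ℝ → ℝ → ℝ → ℝ :=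
  fun t x z => deriv (fun s => u t s z) x

noncomputable def pz (u : ℝ → ℝ → ℝ → ℝ) : ℝ → ℝ → ℝ → ℝ :=
  fun t x z => deriv (fun s => u t x s) z

/-- The generalized qZK operator u_t + f(u) u_z + u_zzz + u_xxz at a point. -/
noncomputable def gqZK (f : ℝ → ℝ) (u : ℝ → ℝ → ℝ → ℝ) (t x z : ℝ) : ℝ :=
  pt u t x z + f (u t x z) * pz u t x z + pz (pz (pz u)) t x z + pz (px (px u)) t x z

/- auxiliary machinery -/

noncomputable def Dw (w : ℝ × ℝ × ℝ) (G : ℝ × ℝ × ℝ → ℝ) : ℝ × ℝ × ℝ → ℝ :=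
  fun p => fderiv ℝ G p w

lemma Dw_smooth (w : ℝ × ℝ × ℝ) {G : ℝ × ℝ × ℝ → ℝ} (hG : ContDiff ℝ (⊤ : ℕ∞) G) :
    ContDiff ℝ (⊤ : ℕ∞) (Dw w G) :=
  (hG.fderiv_right (by simp)).clm_apply contDiff_const

lemma deriv_comp3 {G : ℝ × ℝ × ℝ → ℝ} (hG : Differentiable ℝ G)
    {γ : ℝ → ℝ × ℝ × ℝ} {w : ℝ × ℝ × ℝ} {s : ℝ} (hγ : HasDerivAt γ w s) :
    deriv (fun r => G (γ r)) s = fderiv ℝ G (γ s) w :=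
  ((hG (γ s)).hasFDerivAt.comp_hasDerivAt s hγ).deriv

lemma deriv_comb {G : ℝ × ℝ × ℝ → ℝ} (hG : Differentiable ℝ G) (c : ℝ)
    {γ : ℝ → ℝ × ℝ × ℝ} {w : ℝ × ℝ × ℝ} {s : ℝ} (hγ : HasDerivAt γ w s) :
    deriv (fun r => c * G (γ r)) s = c * fderiv ℝ G (γ s) w :=
  (HasDerivAt.const_mul c ((hG (γ s)).hasFDerivAt.comp_hasDerivAt s hγ)).deriv

lemma curveT (ε x z t : ℝ) :
    HasDerivAt (fun s : ℝ => ((s, x, z - ε * s) : ℝ × ℝ × ℝ)) (1, 0, -ε) t := by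
  apply (hasDerivAt_id t).prodMk
  apply (hasDerivAt_const t x).prodMk
  convert (hasDerivAt_const t z).sub (HasDerivAt.const_mul ε (hasDerivAt_id t)) using 1
  · rfl
  · ring

lemma curveX (t z x : ℝ) :
    HasDerivAt (fun s : ℝ => ((t, s, z) : ℝ × ℝ × ℝ)) (0, 1, 0) x := by
  exact (hasDerivAt_const x t).prodMk ((hasDerivAt_id x).prodMk (hasDerivAt_const x z))

lemma curveZ (t x c z : ℝ) :
    HasDerivAt (fun s : ℝ => ((t, x, s - c) : ℝ × ℝ × ℝ)) (0, 0, 1) z := by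
  exact (hasDerivAt_const z t).prodMk ((hasDerivAt_const z x).prodMk ((hasDerivAt_id z).sub_const c))

lemma curveZ' (t x z : ℝ) :
    HasDerivAt (fun s : ℝ => ((t, x, s) : ℝ × ℝ × ℝ)) (0, 0, 1) z := by
  exact (hasDerivAt_const z t).prodMk ((hasDerivAt_const z x).prodMk (hasDerivAt_id z))

lemma curveT' (x z t : ℝ) :
    HasDerivAt (fun s : ℝ => ((s, x, z) : ℝ × ℝ × ℝ)) (1, 0, 0) t := by
  exact (hasDerivAt_id t).prodMk ((hasDerivAt_const t x).prodMk (hasDerivAt_const t z))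

/-- Symmetry X₄ = t∂_z + u∂_u of the logarithmic generalized qZK (case E, u₀ = 0). -/
theorem stmt12 (u : ℝ → ℝ → ℝ → ℝ)
    (hpos : ∀ t x z : ℝ, 0 < u t x z)
    (hsmooth : ContDiff ℝ (⊤ : ℕ∞) (fun w : ℝ × ℝ × ℝ => u w.1 w.2.1 w.2.2))
    (hsol : ∀ t x z : ℝ, gqZK Real.log u t x z = 0) (ε : ℝ) :
    ∀ t x z : ℝ,
      gqZK Real.log (fun t x z => Real.exp ε * u t x (z - ε * t)) t x z = 0 := by
  intro t x z
  set F : ℝ × ℝ × ℝ → ℝ := fun w => u w.1 w.2.1 w.2.2 with hFdef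
  have hF : ContDiff ℝ (⊤ : ℕ∞) F := hsmooth
  set G3 : ℝ × ℝ × ℝ → ℝ := Dw (0,0,1) F with hG3def
  set G33 : ℝ × ℝ × ℝ → ℝ := Dw (0,0,1) G3 with hG33def
  set G2 : ℝ × ℝ × ℝ → ℝ := Dw (0,1,0) F with hG2def
  set G22 : ℝ × ℝ × ℝ → ℝ := Dw (0,1,0) G2 with hG22def
  have hG3 : ContDiff ℝ (⊤ : ℕ∞) G3 := Dw_smooth _ hF
  have hG33 : ContDiff ℝ (⊤ : ℕ∞) G33 := Dw_smooth _ hG3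
  have hG2 : ContDiff ℝ (⊤ : ℕ∞) G2 := Dw_smooth _ hF
  have hG22 : ContDiff ℝ (⊤ : ℕ∞) G22 := Dw_smooth _ hG2
  have dF : Differentiable ℝ F := hF.differentiable (by simp)
  have dG3 : Differentiable ℝ G3 := hG3.differentiable (by simp)
  have dG33 : Differentiable ℝ G33 := hG33.differentiable (by simp)
  have dG2 : Differentiable ℝ G2 := hG2.differentiable (by simp)
  have dG22 : Differentiable ℝ G22 := hG22.differentiable (by simp)
  set v : ℝ → ℝ → ℝ → ℝ := fun t x z => Real.exp ε * u t x (z - ε * t) with hvdef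
  set c : ℝ := Real.exp ε with hcdef
  -- v-side first z-derivative, everywhere
  have hv_z : ∀ a b d : ℝ, pz v a b d = c * G3 (a, b, d - ε * a) := by
    intro a b d
    exact deriv_comb dF c (curveZ a b (ε * a) d)
  have hv_zz : ∀ a b d : ℝ, pz (pz v) a b d = c * G33 (a, b, d - ε * a) := by
    intro a b d
    have : pz (pz v) a b d = deriv (fun s => c * G3 (a, b, s - ε * a)) d := by
      unfold pz; congr 1; funext s; exact hv_z a b s
    rw [this]
    exact deriv_comb dG3 c (curveZ a b (ε * a) d)
  have hv_zzz : pz (pz (pz v)) t x z = c * Dw (0,0,1) G33 (t, x, z - ε * t) := by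
    have : pz (pz (pz v)) t x z = deriv (fun s => c * G33 (t, x, s - ε * t)) z := by
      unfold pz; congr 1; funext s; exact hv_zz t x s
    rw [this]
    exact deriv_comb dG33 c (curveZ t x (ε * t) z)
  -- v-side x-derivatives
  have hv_x : ∀ a b d : ℝ, px v a b d = c * G2 (a, b, d - ε * a) := by
    intro a b d
    exact deriv_comb dF c (curveX a (d - ε * a) b)
  have hv_xx : ∀ a b d : ℝ, px (px v) a b d = c * G22 (a, b, d - ε * a) := by
    intro a b d
    have : px (px v) a b d = deriv (fun s => c * G2 (a, s, d - ε * a)) b := by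
      unfold px; congr 1; funext s; exact hv_x a s d
    rw [this]
    exact deriv_comb dG2 c (curveX a (d - ε * a) b)
  have hv_xxz : pz (px (px v)) t x z = c * Dw (0,0,1) G22 (t, x, z - ε * t) := by
    have : pz (px (px v)) t x z = deriv (fun s => c * G22 (t, x, s - ε * t)) z := by
      unfold pz; congr 1; funext s; exact hv_xx t x s
    rw [this]
    exact deriv_comb dG22 c (curveZ t x (ε * t) z)
  -- v-side t-derivative
  have hv_t : pt v t x z = c * (Dw (1,0,0) F (t, x, z - ε * t) - ε * G3 (t, x, z - ε * t)) := by
    have h1 : pt v t x z = c * fderiv ℝ F (t, x, z - ε * t) (1, 0, -ε) := by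
      exact deriv_comb dF c (curveT ε x z t)
    rw [h1]
    have hw : ((1, 0, -ε) : ℝ × ℝ × ℝ) = (1, 0, 0) + (-ε) • ((0, 0, 1) : ℝ × ℝ × ℝ) := by
      simp [Prod.ext_iff]
    rw [hw, map_add, map_smul]
    simp only [Dw, hG3def, hFdef, smul_eq_mul]
    ring
  -- u-side derivatives
  have hu_z : ∀ a b d : ℝ, pz u a b d = G3 (a, b, d) := by
    intro a b d
    exact deriv_comp3 dF (curveZ' a b d)
  have hu_zz : ∀ a b d : ℝ, pz (pz u) a b d = G33 (a, b, d) := by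
    intro a b d
    have : pz (pz u) a b d = deriv (fun s => G3 (a, b, s)) d := by
      unfold pz; congr 1; funext s; exact hu_z a b s
    rw [this]
    exact deriv_comp3 dG3 (curveZ' a b d)
  have hu_zzz : ∀ a b d : ℝ, pz (pz (pz u)) a b d = Dw (0,0,1) G33 (a, b, d) := by
    intro a b d
    have : pz (pz (pz u)) a b d = deriv (fun s => G33 (a, b, s)) d := by
      unfold pz; congr 1; funext s; exact hu_zz a b s
    rw [this]
    exact deriv_comp3 dG33 (curveZ' a b d)
  have hu_x : ∀ a b d : ℝ, px u a b d = G2 (a, b, d) := by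
    intro a b d
    exact deriv_comp3 dF (curveX a d b)
  have hu_xx : ∀ a b d : ℝ, px (px u) a b d = G22 (a, b, d) := by
    intro a b d
    have : px (px u) a b d = deriv (fun s => G2 (a, s, d)) b := by
      unfold px; congr 1; funext s; exact hu_x a s d
    rw [this]
    exact deriv_comp3 dG2 (curveX a d b)
  have hu_xxz : ∀ a b d : ℝ, pz (px (px u)) a b d = Dw (0,0,1) G22 (a, b, d) := by
    intro a b d
    have : pz (px (px u)) a b d = deriv (fun s => G22 (a, b, s)) d := by
      unfold pz; congr 1; funext s; exact hu_xx a b s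
    rw [this]
    exact deriv_comp3 dG22 (curveZ' a b d)
  have hu_t : ∀ a b d : ℝ, pt u a b d = Dw (1,0,0) F (a, b, d) := by
    intro a b d
    exact deriv_comp3 dF (curveT' b d a)
  -- combine
  have hsol' := hsol t x (z - ε * t)
  unfold gqZK at hsol' ⊢
  rw [hu_t, hu_z, hu_zzz, hu_xxz] at hsol'
  have hvval : v t x z = c * u t x (z - ε * t) := rfl
  have hlog : Real.log (v t x z) = ε + Real.log (u t x (z - ε * t)) := by
    rw [hvval, hcdef, Real.log_mul (Real.exp_ne_zero ε) (ne_of_gt (hpos _ _ _)), Real.log_exp]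
  rw [hv_t, hv_z, hv_zzz, hv_xxz, hlog]
  nlinarith [hsol', Real.exp_pos ε]
end

section
/- Let p, q ∈ ℝ. If u : (0,∞) × ℝ² → ℝ solves the time-varying qZK equation u_t + u·u_z + t^p·u_zzz + t^q·u_xxz = 0, then the function v obtained by flowing along X_T¹ = t∂_t - ((p-3q-2)/6)x∂_x + ((p+1)/3)z∂_z + ((p-2)/3)u∂_u, namely v(t,x,z) = λ^{(p-2)/3}·u(λ⁻¹t, λ^{(p-3q-2)/6}x, λ^{-(p+1)/3}z) for λ > 0, is again a solution. -/
/-- Time-varying qZK operator u_t + u u_z + tᵖ u_zzz + t^q u_xxz at a point. -/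
noncomputable def tvqZK (p q : ℝ) (u : ℝ → ℝ → ℝ → ℝ) (t x z : ℝ) : ℝ :=
  pt u t x z + u t x z * pz u t x z + t ^ p * pz (pz (pz u)) t x z
    + t ^ q * pz (px (px u)) t x z

/- Auxiliary machinery: directional derivatives via `fderiv`. -/

noncomputable def D1 (F : ℝ × ℝ × ℝ → ℝ) : ℝ × ℝ × ℝ → ℝ := fun w => fderiv ℝ F w (1,0,0)
noncomputable def D2 (F : ℝ × ℝ × ℝ → ℝ) : ℝ × ℝ × ℝ → ℝ := fun w => fderiv ℝ F w (0,1,0)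
noncomputable def D3 (F : ℝ × ℝ × ℝ → ℝ) : ℝ × ℝ × ℝ → ℝ := fun w => fderiv ℝ F w (0,0,1)

def unc (u : ℝ → ℝ → ℝ → ℝ) : ℝ × ℝ × ℝ → ℝ := fun w => u w.1 w.2.1 w.2.2

lemma smoothD (F : ℝ × ℝ × ℝ → ℝ) (hF : ContDiff ℝ (⊤ : ℕ∞) F) (v : ℝ × ℝ × ℝ) :
    ContDiff ℝ (⊤ : ℕ∞) (fun w => fderiv ℝ F w v) :=
  (hF.fderiv_right (by simp)).clm_apply contDiff_const

lemma hdat1 (F : ℝ × ℝ × ℝ → ℝ) (hF : ContDiff ℝ (⊤ : ℕ∞) F) (a x z t : ℝ) :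
    HasDerivAt (fun s => F (a*s, x, z)) (a * D1 F (a*t, x, z)) t := by
  have hc : HasDerivAt (fun s : ℝ => ((a*s, x, z) : ℝ × ℝ × ℝ)) ((a,0,0) : ℝ × ℝ × ℝ) t := by
    simpa using (HasDerivAt.prodMk ((hasDerivAt_id t).const_mul a)
      (HasDerivAt.prodMk (hasDerivAt_const t x) (hasDerivAt_const t z)))
  have h := ((hF.differentiable (by simp)) (a*t,x,z)).hasFDerivAt.comp_hasDerivAt t hc
  refine HasDerivAt.congr_deriv h ?_
  rw [show ((a,0,0) : ℝ × ℝ × ℝ) = a • ((1,0,0) : ℝ × ℝ × ℝ) by simp, map_smul]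
  simp [D1]

lemma hdat2 (F : ℝ × ℝ × ℝ → ℝ) (hF : ContDiff ℝ (⊤ : ℕ∞) F) (t b z x : ℝ) :
    HasDerivAt (fun s => F (t, b*s, z)) (b * D2 F (t, b*x, z)) x := by
  have hc : HasDerivAt (fun s : ℝ => ((t, b*s, z) : ℝ × ℝ × ℝ)) ((0,b,0) : ℝ × ℝ × ℝ) x := by
    simpa using (HasDerivAt.prodMk (hasDerivAt_const x t)
      (HasDerivAt.prodMk ((hasDerivAt_id x).const_mul b) (hasDerivAt_const x z)))
  have h := ((hF.differentiable (by simp)) (t,b*x,z)).hasFDerivAt.comp_hasDerivAt x hc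
  refine HasDerivAt.congr_deriv h ?_
  rw [show ((0,b,0) : ℝ × ℝ × ℝ) = b • ((0,1,0) : ℝ × ℝ × ℝ) by simp, map_smul]
  simp [D2]

lemma hdat3 (F : ℝ × ℝ × ℝ → ℝ) (hF : ContDiff ℝ (⊤ : ℕ∞) F) (t x c z : ℝ) :
    HasDerivAt (fun s => F (t, x, c*s)) (c * D3 F (t, x, c*z)) z := by
  have hc : HasDerivAt (fun s : ℝ => ((t, x, c*s) : ℝ × ℝ × ℝ)) ((0,0,c) : ℝ × ℝ × ℝ) z := by
    simpa using (HasDerivAt.prodMk (hasDerivAt_const z t)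
      (HasDerivAt.prodMk (hasDerivAt_const z x) ((hasDerivAt_id z).const_mul c)))
  have h := ((hF.differentiable (by simp)) (t,x,c*z)).hasFDerivAt.comp_hasDerivAt z hc
  refine HasDerivAt.congr_deriv h ?_
  rw [show ((0,0,c) : ℝ × ℝ × ℝ) = c • ((0,0,1) : ℝ × ℝ × ℝ) by simp, map_smul]
  simp [D3]

lemma pt_scale (u' : ℝ → ℝ → ℝ → ℝ) (h : ContDiff ℝ (⊤ : ℕ∞) (unc u')) (C a b c t x z : ℝ) :
    pt (fun t x z => C * u' (a*t) (b*x) (c*z)) t x z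
      = C * a * D1 (unc u') (a*t, b*x, c*z) := by
  have := ((hdat1 (unc u') h a (b*x) (c*z) t).const_mul C).deriv
  simpa [pt, unc, mul_assoc] using this

lemma px_scale (u' : ℝ → ℝ → ℝ → ℝ) (h : ContDiff ℝ (⊤ : ℕ∞) (unc u')) (C a b c t x z : ℝ) :
    px (fun t x z => C * u' (a*t) (b*x) (c*z)) t x z
      = C * b * D2 (unc u') (a*t, b*x, c*z) := by
  have := ((hdat2 (unc u') h (a*t) b (c*z) x).const_mul C).deriv
  simpa [px, unc, mul_assoc] using this

lemma pz_scale (u' : ℝ → ℝ → ℝ → ℝ) (h : ContDiff ℝ (⊤ : ℕ∞) (unc u')) (C a b c t x z : ℝ) :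
    pz (fun t x z => C * u' (a*t) (b*x) (c*z)) t x z
      = C * c * D3 (unc u') (a*t, b*x, c*z) := by
  have := ((hdat3 (unc u') h (a*t) (b*x) c z).const_mul C).deriv
  simpa [pz, unc, mul_assoc] using this

lemma pt_eq (u' : ℝ → ℝ → ℝ → ℝ) (h : ContDiff ℝ (⊤ : ℕ∞) (unc u')) (t x z : ℝ) :
    pt u' t x z = D1 (unc u') (t, x, z) := by
  have := (hdat1 (unc u') h 1 x z t).deriv
  simpa [pt, unc] using this

lemma px_eq (u' : ℝ → ℝ → ℝ → ℝ) (h : ContDiff ℝ (⊤ : ℕ∞) (unc u')) (t x z : ℝ) :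
    px u' t x z = D2 (unc u') (t, x, z) := by
  have := (hdat2 (unc u') h t 1 z x).deriv
  simpa [px, unc] using this

lemma pz_eq (u' : ℝ → ℝ → ℝ → ℝ) (h : ContDiff ℝ (⊤ : ℕ∞) (unc u')) (t x z : ℝ) :
    pz u' t x z = D3 (unc u') (t, x, z) := by
  have := (hdat3 (unc u') h t x 1 z).deriv
  simpa [pz, unc] using this

/-- Scaling symmetry X_T¹ of the time-varying qZK equation with power-law coefficients. -/
theorem stmt16 (p q : ℝ) (u : ℝ → ℝ → ℝ → ℝ)
    (hsmooth : ContDiff ℝ (⊤ : ℕ∞) (fun w : ℝ × ℝ × ℝ => u w.1 w.2.1 w.2.2))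
    (hsol : ∀ t x z : ℝ, 0 < t → tvqZK p q u t x z = 0) :
    ∀ lam : ℝ, 0 < lam →
      ∀ t x z : ℝ, 0 < t →
        tvqZK p q
          (fun t x z => lam ^ ((p - 2) / 3) *
            u (lam⁻¹ * t) (lam ^ ((p - 3 * q - 2) / 6) * x) (lam ^ (-(p + 1) / 3) * z))
          t x z = 0 := by
  intro lam hlam t x z ht
  have hU : ContDiff ℝ (⊤ : ℕ∞) (unc u) := hsmooth
  set C := lam ^ ((p - 2) / 3) with hCdef
  set a := lam⁻¹ with hadef
  set b := lam ^ ((p - 3 * q - 2) / 6) with hbdef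
  set c := lam ^ (-(p + 1) / 3) with hcdef
  -- curried directional derivatives
  set u1 : ℝ → ℝ → ℝ → ℝ := fun t x z => D1 (unc u) (t,x,z) with hu1
  set u2 : ℝ → ℝ → ℝ → ℝ := fun t x z => D2 (unc u) (t,x,z) with hu2
  set u3 : ℝ → ℝ → ℝ → ℝ := fun t x z => D3 (unc u) (t,x,z) with hu3
  set u33 : ℝ → ℝ → ℝ → ℝ := fun t x z => D3 (D3 (unc u)) (t,x,z) with hu33
  set u22 : ℝ → ℝ → ℝ → ℝ := fun t x z => D2 (D2 (unc u)) (t,x,z) with hu22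
  have hU2 : ContDiff ℝ (⊤ : ℕ∞) (unc u2) := smoothD (unc u) hU (0,1,0)
  have hU3 : ContDiff ℝ (⊤ : ℕ∞) (unc u3) := smoothD (unc u) hU (0,0,1)
  have hU33 : ContDiff ℝ (⊤ : ℕ∞) (unc u33) := smoothD (unc u3) hU3 (0,0,1)
  have hU22 : ContDiff ℝ (⊤ : ℕ∞) (unc u22) := smoothD (unc u2) hU2 (0,1,0)
  -- derivatives of the scaled function (goal side)
  have e1 : pt (fun t x z => C * u (a*t) (b*x) (c*z)) t x z
      = C * a * D1 (unc u) (a*t, b*x, c*z) := pt_scale u hU C a b c t x z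
  have f1 : pz (fun t x z => C * u (a*t) (b*x) (c*z))
      = fun t x z => (C * c) * u3 (a*t) (b*x) (c*z) := by
    funext t' x' z'; exact pz_scale u hU C a b c t' x' z'
  have f2 : pz (pz (fun t x z => C * u (a*t) (b*x) (c*z)))
      = fun t x z => (C * c * c) * u33 (a*t) (b*x) (c*z) := by
    rw [f1]; funext t' x' z'; exact pz_scale u3 hU3 (C*c) a b c t' x' z'
  have e333 : pz (pz (pz (fun t x z => C * u (a*t) (b*x) (c*z)))) t x z
      = (C * c * c * c) * D3 (D3 (D3 (unc u))) (a*t, b*x, c*z) := by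
    rw [f2]; exact pz_scale u33 hU33 (C*c*c) a b c t x z
  have g1 : px (fun t x z => C * u (a*t) (b*x) (c*z))
      = fun t x z => (C * b) * u2 (a*t) (b*x) (c*z) := by
    funext t' x' z'; exact px_scale u hU C a b c t' x' z'
  have g2 : px (px (fun t x z => C * u (a*t) (b*x) (c*z)))
      = fun t x z => (C * b * b) * u22 (a*t) (b*x) (c*z) := by
    rw [g1]; funext t' x' z'; exact px_scale u2 hU2 (C*b) a b c t' x' z'
  have e223 : pz (px (px (fun t x z => C * u (a*t) (b*x) (c*z)))) t x z
      = (C * b * b * c) * D3 (D2 (D2 (unc u))) (a*t, b*x, c*z) := by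
    rw [g2]; exact pz_scale u22 hU22 (C*b*b) a b c t x z
  have e3 : pz (fun t x z => C * u (a*t) (b*x) (c*z)) t x z
      = C * c * D3 (unc u) (a*t, b*x, c*z) := pz_scale u hU C a b c t x z
  -- rewrite the solution equation at the scaled point
  have hpos : (0:ℝ) < a * t := mul_pos (inv_pos.mpr hlam) ht
  have hE := hsol (a*t) (b*x) (c*z) hpos
  unfold tvqZK at hE
  have k1 : pz u = u3 := by funext t' x' z'; exact pz_eq u hU t' x' z'
  have k2 : pz (pz u) = u33 := by
    rw [k1]; funext t' x' z'; exact pz_eq u3 hU3 t' x' z'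
  have k3 : pz (pz (pz u)) (a*t) (b*x) (c*z) = D3 (D3 (D3 (unc u))) (a*t, b*x, c*z) := by
    rw [k2]; exact pz_eq u33 hU33 (a*t) (b*x) (c*z)
  have l1 : px u = u2 := by funext t' x' z'; exact px_eq u hU t' x' z'
  have l2 : px (px u) = u22 := by
    rw [l1]; funext t' x' z'; exact px_eq u2 hU2 t' x' z'
  have l3 : pz (px (px u)) (a*t) (b*x) (c*z) = D3 (D2 (D2 (unc u))) (a*t, b*x, c*z) := by
    rw [l2]; exact pz_eq u22 hU22 (a*t) (b*x) (c*z)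
  rw [pt_eq u hU, pz_eq u hU, k3, l3] at hE
  -- rpow facts
  have key : ∀ r s : ℝ, lam ^ r * lam ^ s = lam ^ (r + s) := fun r s => (Real.rpow_add hlam r s).symm
  have key2 : ∀ r s : ℝ, (lam ^ r) ^ s = lam ^ (r * s) := fun r s => (Real.rpow_mul hlam.le r s).symm
  have ha1 : a = lam ^ (-1 : ℝ) := by rw [hadef, Real.rpow_neg_one]
  have hf3 : C * c = a := by
    rw [hCdef, hcdef, key, ha1]; congr 1; ring
  have hf1 : c * c * c = a * a ^ p := by
    rw [hcdef, ha1, key2, key, key, key]; congr 1; ring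
  have hf2 : b * b * c = a * a ^ q := by
    rw [hbdef, hcdef, ha1, key2, key, key, key]; congr 1; ring
  have hat_p : (a*t) ^ p = a ^ p * t ^ p :=
    Real.mul_rpow (le_of_lt (inv_pos.mpr hlam)) ht.le
  have hat_q : (a*t) ^ q = a ^ q * t ^ q :=
    Real.mul_rpow (le_of_lt (inv_pos.mpr hlam)) ht.le
  rw [hat_p, hat_q] at hE
  -- assemble
  unfold tvqZK
  rw [e1, e3, e333, e223]
  linear_combination (C * a) * hE
    + (C * u (a*t) (b*x) (c*z) * D3 (unc u) (a*t, b*x, c*z)) * hf3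
    + (C * t ^ p * D3 (D3 (D3 (unc u))) (a*t, b*x, c*z)) * hf1
    + (C * t ^ q * D3 (D2 (D2 (unc u))) (a*t, b*x, c*z)) * hf2
end

section
/- For real constants κ ≠ 0 and u₀, the four vector fields X₁ = ∂_t, X₂ = ∂_x, X₃ = ∂_z, X₄^C = 6κt∂_t + 2κx∂_x + (2κz - t + 4u₀κt)∂_z - (1+2κu)∂_u on ℝ⁴ satisfy [X₁, X₄^C] = 6κX₁ + (4κu₀ - 1)X₃, [X₂, X₄^C] = 2κX₂, [X₃, X₄^C] = 2κX₃, and [Xᵢ,Xⱼ] = 0 for i,j ∈ {1,2,3}. -/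
/-- Lie bracket of vector fields on ℝ⁴ (coordinates (t,x,z,u)). -/
noncomputable def lie (X Y : (ℝ × ℝ × ℝ × ℝ) → (ℝ × ℝ × ℝ × ℝ)) :
    (ℝ × ℝ × ℝ × ℝ) → (ℝ × ℝ × ℝ × ℝ) :=
  fun w => fderiv ℝ Y w (X w) - fderiv ℝ X w (Y w)

section aux

variable (κ u₀ : ℝ)

noncomputable def P1 : (ℝ × ℝ × ℝ × ℝ) →L[ℝ] ℝ := ContinuousLinearMap.fst ℝ ℝ (ℝ × ℝ × ℝ)
noncomputable def P2 : (ℝ × ℝ × ℝ × ℝ) →L[ℝ] ℝ :=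
  (ContinuousLinearMap.fst ℝ ℝ (ℝ × ℝ)).comp (ContinuousLinearMap.snd ℝ ℝ (ℝ × ℝ × ℝ))
noncomputable def P3 : (ℝ × ℝ × ℝ × ℝ) →L[ℝ] ℝ :=
  ((ContinuousLinearMap.fst ℝ ℝ ℝ).comp (ContinuousLinearMap.snd ℝ ℝ (ℝ × ℝ))).comp
    (ContinuousLinearMap.snd ℝ ℝ (ℝ × ℝ × ℝ))
noncomputable def P4 : (ℝ × ℝ × ℝ × ℝ) →L[ℝ] ℝ :=
  ((ContinuousLinearMap.snd ℝ ℝ ℝ).comp (ContinuousLinearMap.snd ℝ ℝ (ℝ × ℝ))).comp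
    (ContinuousLinearMap.snd ℝ ℝ (ℝ × ℝ × ℝ))

noncomputable def A : (ℝ × ℝ × ℝ × ℝ) →L[ℝ] (ℝ × ℝ × ℝ × ℝ) :=
  ((6 * κ) • P1).prod (((2 * κ) • P2).prod
    (((2 * κ) • P3 - P1 + (4 * u₀ * κ) • P1).prod (-((2 * κ) • P4))))

@[simp] lemma A_apply (w : ℝ × ℝ × ℝ × ℝ) :
    A κ u₀ w = (6 * κ * w.1, 2 * κ * w.2.1,
      2 * κ * w.2.2.1 - w.1 + 4 * u₀ * κ * w.1, -(2 * κ * w.2.2.2)) := by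
  simp [A, P1, P2, P3, P4]

lemma fderiv_X4 (w : ℝ × ℝ × ℝ × ℝ) :
    fderiv ℝ (fun w : ℝ × ℝ × ℝ × ℝ => (6 * κ * w.1, 2 * κ * w.2.1,
      2 * κ * w.2.2.1 - w.1 + 4 * u₀ * κ * w.1, -(1 + 2 * κ * w.2.2.2))) w = A κ u₀ := by
  have h : (fun w : ℝ × ℝ × ℝ × ℝ => (6 * κ * w.1, 2 * κ * w.2.1,
      2 * κ * w.2.2.1 - w.1 + 4 * u₀ * κ * w.1, -(1 + 2 * κ * w.2.2.2)))
      = fun w => A κ u₀ w + (0, 0, 0, -1) := by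
    funext w
    simp [Prod.ext_iff, A_apply]
  rw [h]
  exact (((A κ u₀).hasFDerivAt).add_const _).fderiv

end aux

/-- Commutators of the Lie symmetries in case C: f(u) = u + κu² + u₀. -/
theorem stmt17 (κ u₀ : ℝ) (hκ : κ ≠ 0)
    (X₁ X₂ X₃ X₄ : (ℝ × ℝ × ℝ × ℝ) → (ℝ × ℝ × ℝ × ℝ))
    (h1 : X₁ = fun _ => (1, 0, 0, 0))
    (h2 : X₂ = fun _ => (0, 1, 0, 0))
    (h3 : X₃ = fun _ => (0, 0, 1, 0))
    (h4 : X₄ = fun w => (6 * κ * w.1, 2 * κ * w.2.1,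
      2 * κ * w.2.2.1 - w.1 + 4 * u₀ * κ * w.1, -(1 + 2 * κ * w.2.2.2))) :
    lie X₁ X₄ = (6 * κ) • X₁ + (4 * κ * u₀ - 1) • X₃ ∧
    lie X₂ X₄ = (2 * κ) • X₂ ∧
    lie X₃ X₄ = (2 * κ) • X₃ ∧
    lie X₁ X₂ = 0 ∧ lie X₁ X₃ = 0 ∧ lie X₂ X₃ = 0 := by
  subst h1 h2 h3 h4
  refine ⟨?_, ?_, ?_, ?_, ?_, ?_⟩ <;> funext w <;> simp only [lie] <;>
    (try rw [fderiv_X4 κ u₀]) <;> simp [Prod.ext_iff] <;> ring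
end
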